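/- Let Λ₂ = diag(λ̂_{k+1},…,λ̂_n) and Λ₁ = diag(λ̃_1,…,λ̃_k) be diagonal positive definite matrices, and suppose S ∈ ℂ^{(n−k)×k} satisfies Λ₂ S − S Λ₁ = −E Λ₁ for some E. Then ‖S‖_F ≤ ‖E‖_F / gap_comp, where gap_comp = min_{i,j} |λ̂_i − λ̃_j| / λ̃_j, provided gap_comp > 0. -/

import Mathlib

open Matrix
open scoped ComplexOrder

noncomputable def specNorm {n : Type*} [Fintype n] [DecidableEq n] (A : Matrix n n ℂ) : ℝ :=
  ‖Matrix.toEuclideanCLM (𝕜 := ℂ) A‖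

noncomputable def frobNorm {m k : Type*} [Fintype m] [Fintype k] (A : Matrix m k ℂ) : ℝ :=
  Real.sqrt (∑ i, ∑ j, ‖A i j‖ ^ 2)

noncomputable def psqrt {n : Type*} [Fintype n] [DecidableEq n] {A : Matrix n n ℂ}
    (hA : A.PosDef) : Matrix n n ℂ :=
  (hA.posSemidef.1.eigenvectorUnitary : Matrix n n ℂ) *
    diagonal ((↑) ∘ (√·) ∘ hA.posSemidef.1.eigenvalues) *
    (star hA.posSemidef.1.eigenvectorUnitary : Matrix n n ℂ)

/- Both Λ₂ and Λ₁ are diagonal, so the Sylvester equation Λ₂ S − S Λ₁ = −E Λ₁ decouples into the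
scalar equations (λ̂ᵢ − λ̃ⱼ) Sᵢⱼ = −λ̃ⱼ Eᵢⱼ. Each gives |Sᵢⱼ| = λ̃ⱼ |Eᵢⱼ| / |λ̂ᵢ − λ̃ⱼ| ≤ |Eᵢⱼ| / gap_comp,
and the Frobenius bound follows by summing squares. -/

lemma diagonal_mul_sub_mul_diagonal_apply {m n α : Type*} [Fintype m] [Fintype n]
    [DecidableEq m] [DecidableEq n] [CommRing α] (d₂ : m → α) (d₁ : n → α) (S : Matrix m n α)
    (i : m) (j : n) :
    (diagonal d₂ * S - S * diagonal d₁) i j = (d₂ i - d₁ j) * S i j := by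
  rw [Matrix.sub_apply, diagonal_mul, mul_diagonal]
  ring

lemma iInf_iInf_le_of_nonneg {ι κ : Type*} {f : ι → κ → ℝ} (hf : ∀ i j, 0 ≤ f i j)
    (i : ι) (j : κ) : ⨅ i, ⨅ j, f i j ≤ f i j := by
  have hrow : ∀ i, BddBelow (Set.range (f i)) := fun i => ⟨0, by rintro _ ⟨j, rfl⟩; exact hf i j⟩
  have hinf : BddBelow (Set.range fun i => ⨅ j, f i j) :=
    ⟨0, by rintro _ ⟨i, rfl⟩; exact Real.iInf_nonneg (hf i)⟩
  exact (ciInf_le hinf i).trans (ciInf_le (hrow i) j)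

lemma norm_le_inv_mul_of_mul_eq_neg_mul {a b g : ℝ} {s e : ℂ} (hb : 0 < b) (hg : 0 < g)
    (hgap : g ≤ |a - b| / b) (h : ((a : ℂ) - b) * s = -(b * e)) : ‖s‖ ≤ g⁻¹ * ‖e‖ := by
  have hnorm : |a - b| * ‖s‖ = b * ‖e‖ := by
    simpa [← Complex.ofReal_sub, abs_of_pos hb] using congrArg norm h
  rw [le_div_iff₀ hb] at hgap
  rw [inv_mul_eq_div, le_div_iff₀ hg]
  refine le_of_mul_le_mul_left ?_ hb
  calc b * (‖s‖ * g) = g * b * ‖s‖ := by ring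
    _ ≤ |a - b| * ‖s‖ := by gcongr
    _ = b * ‖e‖ := hnorm

lemma frobNorm_le_mul_of_norm_le {m n : Type*} [Fintype m] [Fintype n] {A B : Matrix m n ℂ}
    {c : ℝ} (hc : 0 ≤ c) (h : ∀ i j, ‖A i j‖ ≤ c * ‖B i j‖) : frobNorm A ≤ c * frobNorm B := by
  rw [frobNorm, frobNorm, ← Real.sqrt_sq hc, ← Real.sqrt_mul (sq_nonneg c), Finset.mul_sum]
  refine Real.sqrt_le_sqrt (Finset.sum_le_sum fun i _ => ?_)
  rw [Finset.mul_sum]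
  refine Finset.sum_le_sum fun j _ => ?_
  rw [← mul_pow]
  exact pow_le_pow_left₀ (norm_nonneg _) (h i j) 2

theorem stmt_7_general {m k : ℕ} (lam2 : Fin m → ℝ) (lam1 : Fin k → ℝ)
    (h1 : ∀ j, 0 < lam1 j)
    (S E : Matrix (Fin m) (Fin k) ℂ)
    (hS : Matrix.diagonal (fun i => (lam2 i : ℂ)) * S -
        S * Matrix.diagonal (fun j => (lam1 j : ℂ)) =
      -(E * Matrix.diagonal (fun j => (lam1 j : ℂ))))
    (gapc : ℝ) (hg : gapc = ⨅ i, ⨅ j, |lam2 i - lam1 j| / lam1 j) (hpos : 0 < gapc) :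
    frobNorm S ≤ frobNorm E / gapc := by
  have hgap : ∀ i j, gapc ≤ |lam2 i - lam1 j| / lam1 j := fun i j =>
    hg ▸ iInf_iInf_le_of_nonneg (fun _ j => div_nonneg (abs_nonneg _) (h1 j).le) i j
  have hentry : ∀ i j, ((lam2 i : ℂ) - lam1 j) * S i j = -(lam1 j * E i j) := fun i j => by
    have := congrFun (congrFun hS i) j
    rwa [diagonal_mul_sub_mul_diagonal_apply, neg_apply, mul_diagonal, mul_comm (E i j)] at this
  rw [div_eq_inv_mul]
  exact frobNorm_le_mul_of_norm_le (inv_nonneg.2 hpos.le) fun i j =>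
    norm_le_inv_mul_of_mul_eq_neg_mul (h1 j) hpos (hgap i j) (hentry i j)

theorem stmt_7 {m k : ℕ} (lam2 : Fin m → ℝ) (lam1 : Fin k → ℝ)
    (h2 : ∀ i, 0 < lam2 i) (h1 : ∀ j, 0 < lam1 j)
    (S E : Matrix (Fin m) (Fin k) ℂ)
    (hS : Matrix.diagonal (fun i => (lam2 i : ℂ)) * S -
        S * Matrix.diagonal (fun j => (lam1 j : ℂ)) =
      -(E * Matrix.diagonal (fun j => (lam1 j : ℂ))))
    (gapc : ℝ) (hg : gapc = ⨅ i, ⨅ j, |lam2 i - lam1 j| / lam1 j) (hpos : 0 < gapc) :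
    frobNorm S ≤ frobNorm E / gapc :=
  stmt_7_general lam2 lam1 h1 S E hS gapc hg hpos
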